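/- arXiv:2106.06346 — 2 statements merged into one kernel-verified Lean document; each statement's English description precedes it below -/
import Mathlib

section
/- The explicit 8×8 symmetric matrix H₁ (the Hessian of √(2I)·U at the square configuration z₀ = (2,0,0,2,−2,0,0,−2) with four unit masses) has eigenvalues 0 (multiplicity 2), 3/8, 3√2/4, √2/4 + 1/8 (multiplicity 2), and √2/2 + 1/8 (multiplicity 2). -/
open Matrix Polynomial

/-- `√2`. -/
noncomputable def s2 : ℝ := Real.sqrt 2

/-- The Hessian of `√(2I)·U` at the square central configuration
`z₀ = (2,0,0,2,-2,0,0,-2)` with four unit masses. -/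
noncomputable def H1 : Matrix (Fin 8) (Fin 8) ℝ :=
  !![3*s2/16+5/32, 0, -s2/16, -3/32, 3*s2/16-1/32, 0, -s2/16, 3/32;
     0, 3*s2/8+1/16, 3*s2/16, -s2/16, 0, 1/16, -3*s2/16, -s2/16;
     -s2/16, 3*s2/16, 3*s2/8+1/16, 0, -s2/16, -3*s2/16, 1/16, 0;
     -3/32, -s2/16, 0, 3*s2/16+5/32, 3/32, -s2/16, 0, 3*s2/16-1/32;
     3*s2/16-1/32, 0, -s2/16, 3/32, 3*s2/16+5/32, 0, -s2/16, -3/32;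
     0, 1/16, -3*s2/16, -s2/16, 0, 3*s2/8+1/16, 3*s2/16, -s2/16;
     -s2/16, -3*s2/16, 1/16, 0, -s2/16, 3*s2/16, 3*s2/8+1/16, 0;
     3/32, -s2/16, 0, 3*s2/16-1/32, -3/32, -s2/16, 0, 3*s2/16+5/32]

/-- Eigenvector matrix: columns are eigenvectors of `H1`. -/
def Pm : Matrix (Fin 8) (Fin 8) ℝ :=
  !![0, -1, 1, 0, 1, 0, -1, 0;
     1, 0, 0, -1, 0, 1, 0, -1;
     -1, 0, 0, -1, 1, 0, 1, 0;
     0, -1, -1, 0, 0, 1, 0, 1;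
     0, 1, -1, 0, 1, 0, -1, 0;
     -1, 0, 0, 1, 0, 1, 0, -1;
     1, 0, 0, 1, 1, 0, 1, 0;
     0, 1, 1, 0, 0, 1, 0, 1]

/-- Transpose of `Pm`. -/
def Pt : Matrix (Fin 8) (Fin 8) ℝ :=
  !![0, 1, -1, 0, 0, -1, 1, 0;
     -1, 0, 0, -1, 1, 0, 0, 1;
     1, 0, 0, -1, -1, 0, 0, 1;
     0, -1, -1, 0, 0, 1, 1, 0;
     1, 0, 1, 0, 1, 0, 1, 0;
     0, 1, 0, 1, 0, 1, 0, 1;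
     -1, 0, 1, 0, -1, 0, 1, 0;
     0, -1, 0, 1, 0, -1, 0, 1]

/-- Diagonal of eigenvalues. -/
noncomputable def dv : Fin 8 → ℝ :=
  ![0, 0, 3/8, 3*s2/4, s2/4+1/8, s2/4+1/8, s2/2+1/8, s2/2+1/8]

lemma cv5 {α : Type*} (x : α) (u : Fin 7 → α) : Matrix.vecCons x u (5 : Fin 8) = u 4 := rfl
lemma cv6 {α : Type*} (x : α) (u : Fin 7 → α) : Matrix.vecCons x u (6 : Fin 8) = u 5 := rfl
lemma cv7 {α : Type*} (x : α) (u : Fin 7 → α) : Matrix.vecCons x u (7 : Fin 8) = u 6 := rfl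
lemma cv4' {α : Type*} (x : α) (u : Fin 7 → α) : Matrix.vecCons x u (4 : Fin 8) = u 3 := rfl

lemma cv75 {α : Type*} (x : α) (u : Fin 6 → α) : Matrix.vecCons x u (5 : Fin 7) = u 4 := rfl
lemma cv76 {α : Type*} (x : α) (u : Fin 6 → α) : Matrix.vecCons x u (6 : Fin 7) = u 5 := rfl
lemma cv65 {α : Type*} (x : α) (u : Fin 5 → α) : Matrix.vecCons x u (5 : Fin 6) = u 4 := rfl
lemma cv74 {α : Type*} (x : α) (u : Fin 6 → α) : Matrix.vecCons x u (4 : Fin 7) = u 3 := rfl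
lemma cv64 {α : Type*} (x : α) (u : Fin 5 → α) : Matrix.vecCons x u (4 : Fin 6) = u 3 := rfl
lemma cv54 {α : Type*} (x : α) (u : Fin 4 → α) : Matrix.vecCons x u (4 : Fin 5) = u 3 := rfl

lemma charpoly_conj {n : Type*} [Fintype n] [DecidableEq n] {R : Type*} [CommRing R]
    (P D Q : Matrix n n R) (h1 : P * Q = 1) (h2 : Q * P = 1) :
    (P * D * Q).charpoly = D.charpoly := by
  have hm : ∀ A B : Matrix n n R,
      (C : R →+* R[X]).mapMatrix (A * B) =
        (C : R →+* R[X]).mapMatrix A * (C : R →+* R[X]).mapMatrix B := fun A B => by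
    simp
  have key : charmatrix (P * D * Q) =
      (C : R →+* R[X]).mapMatrix P * charmatrix D * (C : R →+* R[X]).mapMatrix Q := by
    unfold charmatrix
    rw [hm (P * D) Q, hm P D, mul_sub, sub_mul]
    congr 1
    rw [mul_assoc, scalar_commute (X : R[X]) (fun r => (Commute.all _ _)) _, ← mul_assoc,
      ← hm, h1]
    simp
  rw [Matrix.charpoly, key, det_mul, det_mul]
  have : ((C : R →+* R[X]).mapMatrix P).det * ((C : R →+* R[X]).mapMatrix Q).det = 1 := by
    rw [← det_mul, ← hm, h1]; simp
  calc ((C : R →+* R[X]).mapMatrix P).det * (charmatrix D).det *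
        ((C : R →+* R[X]).mapMatrix Q).det
      = (charmatrix D).det * (((C : R →+* R[X]).mapMatrix P).det *
        ((C : R →+* R[X]).mapMatrix Q).det) := by ring
    _ = D.charpoly := by rw [this, mul_one, Matrix.charpoly]

lemma hPPt : Pm * Pt = (4 : ℝ) • 1 := by
  ext i j
  fin_cases i <;> fin_cases j <;>
    norm_num [Pm, Matrix.mul_apply, Fin.sum_univ_succ, Matrix.cons_val_zero,
      Matrix.cons_val_succ, Matrix.one_apply, Pt, Fin.ext_iff, cv4', cv5, cv6, cv7, cv75, cv76, cv65, cv74, cv64, cv54]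

lemma hPtP : Pt * Pm = (4 : ℝ) • 1 := by
  ext i j
  fin_cases i <;> fin_cases j <;>
    norm_num [Pm, Matrix.mul_apply, Fin.sum_univ_succ, Matrix.cons_val_zero,
      Matrix.cons_val_succ, Matrix.one_apply, Pt, Fin.ext_iff, cv4', cv5, cv6, cv7, cv75, cv76, cv65, cv74, cv64, cv54]

set_option maxHeartbeats 4000000 in
lemma hH1 : H1 = Pm * Matrix.diagonal dv * ((4 : ℝ)⁻¹ • Pt) := by
  ext i j
  fin_cases i <;> fin_cases j <;>
    simp [H1, Pm, dv, Matrix.mul_diagonal, Matrix.vecMul_diagonal, Matrix.mul_apply, Fin.sum_univ_succ,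
      Matrix.cons_val_zero, Matrix.cons_val_succ, Pt, Matrix.smul_apply, cv4', cv5, cv6, cv7, cv75, cv76, cv65, cv74, cv64, cv54] <;>
    ring

set_option maxHeartbeats 2000000 in
/-- The explicit `8 × 8` Hessian `H₁` of `√(2I)·U` at the square configuration has
eigenvalues `0` (multiplicity 2), `3/8`, `3√2/4`, `√2/4 + 1/8` (multiplicity 2) and
`√2/2 + 1/8` (multiplicity 2): its characteristic polynomial factors accordingly. -/
theorem H1_eigenvalues :
    H1.charpoly =
      X ^ 2 * (X - C (3/8)) * (X - C (3*s2/4)) *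
        (X - C (s2/4 + 1/8)) ^ 2 * (X - C (s2/2 + 1/8)) ^ 2 := by
  have h1 : Pm * ((4 : ℝ)⁻¹ • Pt) = 1 := by
    rw [Matrix.mul_smul, hPPt, smul_smul]; norm_num
  have h2 : ((4 : ℝ)⁻¹ • Pt) * Pm = 1 := by
    rw [Matrix.smul_mul, hPtP, smul_smul]; norm_num
  rw [hH1, charpoly_conj _ _ _ h1 h2]
  rw [Matrix.charpoly_of_upperTriangular _ (Matrix.blockTriangular_diagonal dv)]
  simp only [Matrix.diagonal_apply_eq, dv]
  rw [Fin.prod_univ_eight]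
  simp only [Matrix.cons_val_zero, Matrix.cons_val_one, Matrix.cons_val_succ,
    Matrix.head_cons, Matrix.cons_val_two, Matrix.cons_val_three, Matrix.cons_val_four,
    cv5, cv6, cv7, cv75, cv76, cv65, cv74, cv64, cv54, cv4', Matrix.vecTail, Matrix.vecHead, Function.comp, map_zero]
  ring
end

section
/- The trace of the explicit 8×8 Hessian matrix H₁ of √(2I)U at the square central configuration equals 9√2/4 + 7/8, and the determinant of H₁ + I₈ equals 340505/32768 + 963897√2/131072. -/
set_option maxHeartbeats 2000000

open Matrix

lemma hs2 : s2 ^ 2 = 2 := Real.sq_sqrt (by norm_num)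

noncomputable def Lm : Matrix (Fin 8) (Fin 8) ℝ :=
  !![ 1, 0, 0, 0, 0, 0, 0, 0;
      0, 1, 0, 0, 0, 0, 0, 0;
      ((24/1297) + (-74/1297)*s2), ((-36/217) + (51/217)*s2), 1, 0, 0, 0, 0, 0;
      ((-111/1297) + (18/1297)*s2), ((12/217) + (-17/217)*s2), ((3090666/43505593) + (-2008317/43505593)*s2), 1, 0, 0, 0, 0;
      ((-109/1297) + (228/1297)*s2), 0, ((5507568/43505593) + (-5366474/43505593)*s2), ((111211527/1687052303) + (28145607/3374104606)*s2), 1, 0, 0, 0;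
      0, ((17/217) + (-6/217)*s2), ((12588516/43505593) + (-14394834/43505593)*s2), ((-12919404/1687052303) + (-61354936/1687052303)*s2), ((-2810172768/44671239365) + (1832488008/44671239365)*s2), 1, 0, 0;
      ((24/1297) + (-74/1297)*s2), ((36/217) + (-51/217)*s2), ((11758317/43505593) + (-6298050/43505593)*s2), ((-71614428/1687052303) + (32768616/1687052303)*s2), ((165878496/8934247873) + (-2138587144/44671239365)*s2), ((-73809/114239) + (67548/114239)*s2), 1, 0;
      ((111/1297) + (-18/1297)*s2), ((12/217) + (-17/217)*s2), ((2221050/43505593) + (-1160979/43505593)*s2), ((-159757224/1687052303) + (623622489/3374104606)*s2), ((-3731962053/44671239365) + (-55014960/8934247873)*s2), ((547008/6914497) + (-603152/6914497)*s2), 0, 1]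

noncomputable def Um : Matrix (Fin 8) (Fin 8) ℝ :=
  !![ ((37/32) + (3/16)*s2), 0, (-1/16)*s2, (-3/32), ((-1/32) + (3/16)*s2), 0, (-1/16)*s2, (3/32);
      0, ((17/16) + (3/8)*s2), (3/16)*s2, (-1/16)*s2, 0, (1/16), (-3/16)*s2, (-1/16)*s2;
      0, 0, ((4355635/4503184) + (916989/2251592)*s2), ((70053/2251592) + (-70779/4503184)*s2), ((57/2594) + (-703/10376)*s2), ((9/868) + (-351/1736)*s2), ((646215/4503184) + (-33717/1125796)*s2), ((62241/2251592) + (-22605/4503184)*s2);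
      0, 0, 0, ((49368958/43505593) + (67802637/348044744)*s2), ((27166629/348044744) + (7764141/348044744)*s2), ((-994530/43505593) + (-3720721/87011186)*s2), ((-1766442/43505593) + (1198299/87011186)*s2), ((-12336981/348044744) + (8322090/43505593)*s2);
      0, 0, 0, 0, ((1792810745/1687052303) + (5882195235/26992836848)*s2), ((-82619745/1687052303) + (50416782/1687052303)*s2), ((-1914087/1687052303) + (-79003102/1687052303)*s2), ((-154304139/1687052303) + (-668050467/26992836848)*s2);
      0, 0, 0, 0, 0, ((40739621201/44671239365) + (78870303843/178684957460)*s2), ((-3004097193/44671239365) + (9079528839/35736991492)*s2), ((-43401336/8934247873) + (-1993856128/44671239365)*s2);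
      0, 0, 0, 0, 0, 0, ((65020/114239) + (73368/114239)*s2), 0;
      0, 0, 0, 0, 0, 0, 0, ((7241828/6914497) + (1510080/6914497)*s2)]


lemma rowEq0 : ∀ j, (H1 + 1) ⟨0, by norm_num⟩ j = (Lm * Um) ⟨0, by norm_num⟩ j := by
  intro j
  have hs : s2 ^ 2 = 2 := hs2
  fin_cases j <;>
    norm_num only [H1, Lm, Um, Matrix.add_apply, Matrix.one_apply, Matrix.mul_apply,
      Fin.sum_univ_succ, Matrix.cons_val_zero, Matrix.cons_val_one, Matrix.head_cons,
      Matrix.cons_val_succ, Matrix.cons_val_succ', Matrix.of_apply, Matrix.cons_val',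
      Matrix.empty_val', Matrix.cons_val_fin_one, Matrix.head_fin_const, if_true, if_false,
      Finset.univ_unique, Finset.sum_singleton, Fin.default_eq_zero, Fin.isValue,
      Fin.mk.injEq, Fin.zero_eta, Fin.ext_iff, Fin.val_zero] <;>
    first
    | (ring_nf; rw [hs]; ring)
    | ring

lemma rowEq1 : ∀ j, (H1 + 1) ⟨1, by norm_num⟩ j = (Lm * Um) ⟨1, by norm_num⟩ j := by
  intro j
  have hs : s2 ^ 2 = 2 := hs2
  fin_cases j <;>
    norm_num only [H1, Lm, Um, Matrix.add_apply, Matrix.one_apply, Matrix.mul_apply,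
      Fin.sum_univ_succ, Matrix.cons_val_zero, Matrix.cons_val_one, Matrix.head_cons,
      Matrix.cons_val_succ, Matrix.cons_val_succ', Matrix.of_apply, Matrix.cons_val',
      Matrix.empty_val', Matrix.cons_val_fin_one, Matrix.head_fin_const, if_true, if_false,
      Finset.univ_unique, Finset.sum_singleton, Fin.default_eq_zero, Fin.isValue,
      Fin.mk.injEq, Fin.zero_eta, Fin.ext_iff, Fin.val_zero] <;>
    first
    | (ring_nf; rw [hs]; ring)
    | ring

lemma rowEq2 : ∀ j, (H1 + 1) ⟨2, by norm_num⟩ j = (Lm * Um) ⟨2, by norm_num⟩ j := by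
  intro j
  have hs : s2 ^ 2 = 2 := hs2
  fin_cases j <;>
    norm_num only [H1, Lm, Um, Matrix.add_apply, Matrix.one_apply, Matrix.mul_apply,
      Fin.sum_univ_succ, Matrix.cons_val_zero, Matrix.cons_val_one, Matrix.head_cons,
      Matrix.cons_val_succ, Matrix.cons_val_succ', Matrix.of_apply, Matrix.cons_val',
      Matrix.empty_val', Matrix.cons_val_fin_one, Matrix.head_fin_const, if_true, if_false,
      Finset.univ_unique, Finset.sum_singleton, Fin.default_eq_zero, Fin.isValue,
      Fin.mk.injEq, Fin.zero_eta, Fin.ext_iff, Fin.val_zero] <;>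
    first
    | (ring_nf; rw [hs]; ring)
    | ring

lemma rowEq3 : ∀ j, (H1 + 1) ⟨3, by norm_num⟩ j = (Lm * Um) ⟨3, by norm_num⟩ j := by
  intro j
  have hs : s2 ^ 2 = 2 := hs2
  fin_cases j <;>
    norm_num only [H1, Lm, Um, Matrix.add_apply, Matrix.one_apply, Matrix.mul_apply,
      Fin.sum_univ_succ, Matrix.cons_val_zero, Matrix.cons_val_one, Matrix.head_cons,
      Matrix.cons_val_succ, Matrix.cons_val_succ', Matrix.of_apply, Matrix.cons_val',
      Matrix.empty_val', Matrix.cons_val_fin_one, Matrix.head_fin_const, if_true, if_false,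
      Finset.univ_unique, Finset.sum_singleton, Fin.default_eq_zero, Fin.isValue,
      Fin.mk.injEq, Fin.zero_eta, Fin.ext_iff, Fin.val_zero] <;>
    first
    | (ring_nf; rw [hs]; ring)
    | ring

lemma rowEq4 : ∀ j, (H1 + 1) ⟨4, by norm_num⟩ j = (Lm * Um) ⟨4, by norm_num⟩ j := by
  intro j
  have hs : s2 ^ 2 = 2 := hs2
  fin_cases j <;>
    norm_num only [H1, Lm, Um, Matrix.add_apply, Matrix.one_apply, Matrix.mul_apply,
      Fin.sum_univ_succ, Matrix.cons_val_zero, Matrix.cons_val_one, Matrix.head_cons,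
      Matrix.cons_val_succ, Matrix.cons_val_succ', Matrix.of_apply, Matrix.cons_val',
      Matrix.empty_val', Matrix.cons_val_fin_one, Matrix.head_fin_const, if_true, if_false,
      Finset.univ_unique, Finset.sum_singleton, Fin.default_eq_zero, Fin.isValue,
      Fin.mk.injEq, Fin.zero_eta, Fin.ext_iff, Fin.val_zero] <;>
    first
    | (ring_nf; rw [hs]; ring)
    | ring

lemma rowEq5 : ∀ j, (H1 + 1) ⟨5, by norm_num⟩ j = (Lm * Um) ⟨5, by norm_num⟩ j := by
  intro j
  have hs : s2 ^ 2 = 2 := hs2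
  fin_cases j <;>
    norm_num only [H1, Lm, Um, Matrix.add_apply, Matrix.one_apply, Matrix.mul_apply,
      Fin.sum_univ_succ, Matrix.cons_val_zero, Matrix.cons_val_one, Matrix.head_cons,
      Matrix.cons_val_succ, Matrix.cons_val_succ', Matrix.of_apply, Matrix.cons_val',
      Matrix.empty_val', Matrix.cons_val_fin_one, Matrix.head_fin_const, if_true, if_false,
      Finset.univ_unique, Finset.sum_singleton, Fin.default_eq_zero, Fin.isValue,
      Fin.mk.injEq, Fin.zero_eta, Fin.ext_iff, Fin.val_zero] <;>
    first
    | (ring_nf; rw [hs]; ring)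
    | ring

lemma rowEq6 : ∀ j, (H1 + 1) ⟨6, by norm_num⟩ j = (Lm * Um) ⟨6, by norm_num⟩ j := by
  intro j
  have hs : s2 ^ 2 = 2 := hs2
  fin_cases j <;>
    norm_num only [H1, Lm, Um, Matrix.add_apply, Matrix.one_apply, Matrix.mul_apply,
      Fin.sum_univ_succ, Matrix.cons_val_zero, Matrix.cons_val_one, Matrix.head_cons,
      Matrix.cons_val_succ, Matrix.cons_val_succ', Matrix.of_apply, Matrix.cons_val',
      Matrix.empty_val', Matrix.cons_val_fin_one, Matrix.head_fin_const, if_true, if_false,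
      Finset.univ_unique, Finset.sum_singleton, Fin.default_eq_zero, Fin.isValue,
      Fin.mk.injEq, Fin.zero_eta, Fin.ext_iff, Fin.val_zero] <;>
    first
    | (ring_nf; rw [hs]; ring)
    | ring

lemma rowEq7 : ∀ j, (H1 + 1) ⟨7, by norm_num⟩ j = (Lm * Um) ⟨7, by norm_num⟩ j := by
  intro j
  have hs : s2 ^ 2 = 2 := hs2
  fin_cases j <;>
    norm_num only [H1, Lm, Um, Matrix.add_apply, Matrix.one_apply, Matrix.mul_apply,
      Fin.sum_univ_succ, Matrix.cons_val_zero, Matrix.cons_val_one, Matrix.head_cons,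
      Matrix.cons_val_succ, Matrix.cons_val_succ', Matrix.of_apply, Matrix.cons_val',
      Matrix.empty_val', Matrix.cons_val_fin_one, Matrix.head_fin_const, if_true, if_false,
      Finset.univ_unique, Finset.sum_singleton, Fin.default_eq_zero, Fin.isValue,
      Fin.mk.injEq, Fin.zero_eta, Fin.ext_iff, Fin.val_zero] <;>
    first
    | (ring_nf; rw [hs]; ring)
    | ring

lemma H1_factorization : H1 + 1 = Lm * Um := by
  ext i j
  fin_cases i
  · exact rowEq0 j
  · exact rowEq1 j
  · exact rowEq2 j
  · exact rowEq3 j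
  · exact rowEq4 j
  · exact rowEq5 j
  · exact rowEq6 j
  · exact rowEq7 j

lemma detL : Lm.det = 1 := by
  have h : Lm.BlockTriangular OrderDual.toDual := by
    intro i j hij
    fin_cases i <;> fin_cases j <;>
      first
      | exact absurd hij (by decide)
      | norm_num [Lm, Matrix.cons_val_succ', Fin.zero_eta]
  rw [Matrix.det_of_lowerTriangular Lm h]
  simp [Lm, Fin.prod_univ_succ]

lemma detU : Um.det = 340505/32768 + 963897*s2/131072 := by
  have hs : s2 ^ 2 = 2 := hs2
  have h : Um.BlockTriangular id := by
    intro i j hij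
    fin_cases i <;> fin_cases j <;>
      first
      | exact absurd hij (by decide)
      | norm_num [Um, Matrix.cons_val_succ', Fin.zero_eta]
  rw [Matrix.det_of_upperTriangular h]
  simp only [Um, Fin.prod_univ_succ, Finset.univ_unique, Finset.prod_singleton,
    Fin.default_eq_zero, Matrix.cons_val', Matrix.cons_val_zero, Matrix.cons_val_one,
    Matrix.head_cons, Matrix.of_apply, Matrix.cons_val_succ, Matrix.cons_val_fin_one,
    Matrix.empty_val', Matrix.head_fin_const]
  linear_combination ((45918494664152484569125857598516206542253360680745/9554022573023696734068538670093283705748448149504)*s2^0 + (93872585487261150579751173169585557418557695268873/38216090292094786936274154680373134822993792598016)*s2^1 + (8315934897331438866367305776592416189149808959911/9554022573023696734068538670093283705748448149504)*s2^2 + (7729719064598358175370166163209018833517335625/38524284568643938443824752701989047200598581248)*s2^3 + (67953364269984358295412902330743983505873451529/2388505643255924183517134667523320926437112037376)*s2^4 + (765895171902016361347813902467625791638826337/341215091893703454788162095360474418062444576768)*s2^5 + (1604999125265316201426312834939243166530195/21325943243356465924260130960029651128902786048)*s2^6 : ℝ) * hs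

/-- The trace of the explicit `8 × 8` Hessian `H₁` of `√(2I)·U` at the square central
configuration equals `9√2/4 + 7/8`, and the determinant of `H₁ + I₈` equals
`340505/32768 + 963897√2/131072`. -/
theorem H1_trace_and_det :
    Matrix.trace H1 = 9*s2/4 + 7/8 ∧
    Matrix.det (H1 + 1) = 340505/32768 + 963897*s2/131072 := by
  constructor
  · simp [Matrix.trace, H1, Fin.sum_univ_succ, Matrix.diag]
    ring
  · have key := Matrix.det_mul Lm Um
    have hprod : (@HMul.hMul (Matrix (Fin 8) (Fin 8) ℝ) (Matrix (Fin 8) (Fin 8) ℝ)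
        (Matrix (Fin 8) (Fin 8) ℝ)
        (@Matrix.instHMulOfFintypeOfMulOfAddCommMonoid (Fin 8) (Fin 8) (Fin 8) ℝ (Fin.fintype 8)
          (@NonUnitalNonAssocRing.toMul ℝ
            (@NonUnitalNonAssocCommRing.toNonUnitalNonAssocRing ℝ
              (@NonUnitalCommRing.toNonUnitalNonAssocCommRing ℝ
                (@CommRing.toNonUnitalCommRing ℝ Real.commRing))))
          (@NonUnitalNonAssocSemiring.toAddCommMonoid ℝ
            (@NonUnitalNonAssocCommSemiring.toNonUnitalNonAssocSemiring ℝ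
              (@NonUnitalNonAssocCommRing.toNonUnitalNonAssocCommSemiring ℝ
                (@NonUnitalCommRing.toNonUnitalNonAssocCommRing ℝ
                  (@CommRing.toNonUnitalCommRing ℝ Real.commRing))))))
        Lm Um) = Lm * Um := rfl
    rw [hprod] at key
    rw [H1_factorization, key, detL, detU, one_mul]
end
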